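/- Let S be a unital inverse semigroup, E its idempotents, X the set of unital characters on E, and for χ ∈ X and s ∈ S with χ(s*s)=1 let χ_s(e) = χ(s* e s). Writing P_χ for the minimal idempotent corresponding to χ, the relation P_{χ_s} corresponds under the standard form to conjugation: if P_χ has standard form u_e ∏_{f<e}(1−u_f) with e ≤ s*s, then P_{χ_s} has standard form u_{ses*} ∏_{f<e}(1 − u_{sfs*}). -/

import Mathlib

/-- The set `X` of unital semilattice characters on the idempotents of `S`, encoded as
maps `χ : S → Bool` which are multiplicative on idempotents and unital. -/
abbrev IdemChar (S : Type*) [Monoid S] : Type _ :=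
  {χ : S → Bool //
    (∀ e f : S, e * e = e → f * f = f → χ (e * f) = (χ e && χ f)) ∧ χ 1 = true}

/-- The function `u_a : X → ℤ`, `u_a(χ) = χ(a)`. -/
def uFun {S : Type*} [Monoid S] (a : S) : IdemChar S → ℤ :=
  fun χ => if χ.1 a then 1 else 0

/-- The minimal idempotent attached to the values `g : S → Bool` on idempotents:
`P_g = ∏_{e idempotent, g(e)=1} u_e · ∏_{f idempotent, g(f)=0} (1 - u_f)`. -/
def Pmin {S : Type*} [Monoid S] [Fintype S] [DecidableEq S] (g : S → Bool) :
    IdemChar S → ℤ :=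
  (∏ e ∈ Finset.univ.filter (fun e : S => e * e = e ∧ g e = true), uFun e) *
    ∏ f ∈ Finset.univ.filter (fun f : S => f * f = f ∧ g f = false), (1 - uFun f)


/-!
Since idempotents of an inverse monoid commute, the standard form at an idempotent `e` is the
minimal idempotent of the principal character `a ↦ [e ≤ a]`; so `P_χ` has standard form at `e`
exactly when `χ` is that character on idempotents. For `e ≤ s*s`, `e ≤ s* a s ↔ s e s* ≤ a`, hence
`χ_s` is the principal character of `s e s*`, and `f ↦ s f s*` maps `{f < e}` bijectively onto
`{f < s e s*}`.
-/

open Finset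

section InverseMonoid

variable {S : Type*} [Monoid S]

def IdempotentsCommute (S : Type*) [Monoid S] : Prop :=
  ∀ a b : S, IsIdempotentElem a → IsIdempotentElem b → Commute a b

theorem IsIdempotentElem.mul_of_inverse (inv : S → S)
    (h1 : ∀ s, s * inv s * s = s) (h2 : ∀ s, inv s * s * inv s = inv s)
    (huniq : ∀ s t, s * t * s = s → t * s * t = t → t = inv s) {a b : S}
    (ha : IsIdempotentElem a) (hb : IsIdempotentElem b) : IsIdempotentElem (a * b) := by
  -- `b (ab)⁻¹ a` is an idempotent inverse of `ab`, and idempotents are self-inverse.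
  set x := inv (a * b)
  have hy : IsIdempotentElem (b * x * a) := calc
    _ = b * (x * (a * b) * x) * a := by simp only [mul_assoc]
    _ = b * x * a := by rw [h2]
  have hab_y : a * b * (b * x * a) * (a * b) = a * b := by
    simpa only [mul_assoc, ha.mul_self_mul, hb.mul_self_mul] using h1 (a * b)
  have hy_ab : b * x * a * (a * b) * (b * x * a) = b * x * a := calc
    _ = b * (x * (a * b) * x) * a := by simp only [mul_assoc, ha.mul_self_mul, hb.mul_self_mul]
    _ = b * x * a := by rw [h2]
  have hy_inv : b * x * a = inv (b * x * a) :=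
    huniq _ _ (by rw [hy.eq, hy.eq]) (by rw [hy.eq, hy.eq])
  rw [huniq _ _ hy_ab hab_y, ← hy_inv]
  exact hy

theorem idempotentsCommute_of_inverse (inv : S → S)
    (h1 : ∀ s, s * inv s * s = s) (h2 : ∀ s, inv s * s * inv s = inv s)
    (huniq : ∀ s t, s * t * s = s → t * s * t = t → t = inv s) : IdempotentsCommute S := by
  intro a b ha hb
  -- `ab` and `ba` are idempotents inverse to each other.
  have hab := ha.mul_of_inverse inv h1 h2 huniq hb
  have hba := hb.mul_of_inverse inv h1 h2 huniq ha
  have hab_ba : a * b * (b * a) * (a * b) = a * b := by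
    simpa only [mul_assoc, ha.mul_self_mul, hb.mul_self_mul] using hab.eq
  have hba_ab : b * a * (a * b) * (b * a) = b * a := by
    simpa only [mul_assoc, ha.mul_self_mul, hb.mul_self_mul] using hba.eq
  have hab_inv : a * b = inv (a * b) :=
    huniq _ _ (by rw [hab.eq, hab.eq]) (by rw [hab.eq, hab.eq])
  exact hab_inv.trans (huniq _ _ hab_ba hba_ab).symm

end InverseMonoid

section Conjugation

variable {S : Type*} [Monoid S] {s t : S}

theorem isIdempotentElem_mul_of_mul_mul_self (hts : t * s * t = t) : IsIdempotentElem (t * s) := by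
  rw [IsIdempotentElem, ← mul_assoc, hts]

theorem mul_eq_self_of_le (hcomm : IdempotentsCommute S) {e f p : S} (he : IsIdempotentElem e)
    (hf : IsIdempotentElem f) (hef : e * f = f) (hep : e * p = e) : f * p = f := calc
  f * p = f * e * p := by rw [← (hcomm e f he hf).eq, hef]
  _ = f * e := by rw [mul_assoc, hep]
  _ = f := by rw [← (hcomm e f he hf).eq, hef]

theorem conj_mul_conj (hcomm : IdempotentsCommute S) (hts : t * s * t = t) (a : S) {b : S}
    (hb : IsIdempotentElem b) : s * a * t * (s * b * t) = s * (a * b) * t := calc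
  _ = s * a * (t * s * b) * t := by simp only [mul_assoc]
  _ = s * a * (b * (t * s)) * t := by
    rw [(hcomm _ _ (isIdempotentElem_mul_of_mul_mul_self hts) hb).eq]
  _ = s * (a * b) * (t * s * t) := by simp only [mul_assoc]
  _ = s * (a * b) * t := by rw [hts]

theorem IsIdempotentElem.conj (hcomm : IdempotentsCommute S) (hts : t * s * t = t) {a : S}
    (ha : IsIdempotentElem a) : IsIdempotentElem (s * a * t) := by
  rw [IsIdempotentElem, conj_mul_conj hcomm hts a ha, ha.eq]

theorem conj_conj_of_le (hcomm : IdempotentsCommute S) (hts : t * s * t = t) {f : S}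
    (hf : IsIdempotentElem f) (hle : f * (t * s) = f) : t * (s * f * t) * s = f := calc
  _ = t * s * f * (t * s) := by simp only [mul_assoc]
  _ = f := by
    rw [← (hcomm _ _ hf (isIdempotentElem_mul_of_mul_mul_self hts)).eq, hle, hle]

theorem mul_conj_eq_self_iff (hcomm : IdempotentsCommute S) (hsts : s * t * s = s)
    (hts : t * s * t = t) {e a : S} (he : IsIdempotentElem e) (hle : e * (t * s) = e)
    (ha : IsIdempotentElem a) : e * (t * a * s) = e ↔ s * e * t * a = s * e * t := by
  constructor
  · intro h
    calc s * e * t * a = s * e * (t * s * t) * a := by rw [hts]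
      _ = s * e * t * (s * t * a) := by simp only [mul_assoc]
      _ = s * e * t * (a * (s * t)) := by
          rw [(hcomm _ _ ha (isIdempotentElem_mul_of_mul_mul_self hsts)).eq]
      _ = s * (e * (t * a * s)) * t := by simp only [mul_assoc]
      _ = s * e * t := by rw [h, mul_assoc]
  · intro h
    calc e * (t * a * s) = t * (s * e * t) * s * (t * a * s) := by
          rw [conj_conj_of_le hcomm hts he hle]
      _ = e := by rw [conj_mul_conj hcomm hsts _ ha, h, conj_conj_of_le hcomm hts he hle]

end Conjugation

section Characters

variable {S : Type*} [Monoid S]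

theorem uFun_apply (a : S) (ψ : IdemChar S) : uFun a ψ = if ψ.1 a then 1 else 0 := rfl

theorem one_sub_uFun_apply (a : S) (ψ : IdemChar S) :
    (1 - uFun a) ψ = if ψ.1 a = false then 1 else 0 := by
  rw [Pi.sub_apply, uFun_apply]
  cases ψ.1 a <;> simp

variable [DecidableEq S]

def principalChar (e a : S) : Bool :=
  decide (e * a = e)

theorem principalChar_mul (hcomm : IdempotentsCommute S) (e : S) {b c : S}
    (hb : IsIdempotentElem b) (hc : IsIdempotentElem c) :
    principalChar e (b * c) = (principalChar e b && principalChar e c) := by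
  simp only [principalChar, ← Bool.decide_and]
  refine decide_eq_decide.mpr ⟨fun h => ⟨?_, ?_⟩, fun h => by rw [← mul_assoc, h.1, h.2]⟩
  · calc e * b = e * (b * c) * b := by rw [h]
      _ = e := by rw [mul_assoc e, mul_assoc b, (hcomm c b hc hb).eq, hb.mul_self_mul, h]
  · calc e * c = e * (b * c) * c := by rw [h]
      _ = e := by rw [mul_assoc e, mul_assoc b, hc.eq, h]

def principalIdemChar (hcomm : IdempotentsCommute S) (e : S) : IdemChar S :=
  ⟨principalChar e, fun _ _ hb hc => principalChar_mul hcomm e hb hc, by simp [principalChar]⟩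

end Characters

section MinimalIdempotents

variable {S : Type*} [Monoid S] [Fintype S] [DecidableEq S]

def idempotentsLT (e : S) : Finset S :=
  univ.filter fun f : S => f * f = f ∧ e * f = f ∧ f ≠ e

theorem mem_idempotentsLT {e f : S} :
    f ∈ idempotentsLT e ↔ IsIdempotentElem f ∧ e * f = f ∧ f ≠ e := by
  simp [idempotentsLT, IsIdempotentElem]

def stdForm (e : S) : IdemChar S → ℤ :=
  uFun e * ∏ f ∈ idempotentsLT e, (1 - uFun f)

open scoped Classical in
theorem Pmin_apply (g : S → Bool) (ψ : IdemChar S) :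
    Pmin g ψ = if ∀ a, IsIdempotentElem a → ψ.1 a = g a then 1 else 0 := by
  simp only [Pmin, Pi.mul_apply, prod_apply, uFun_apply, one_sub_uFun_apply,
    prod_boole, ite_zero_mul_ite_zero, mul_one]
  refine if_congr ?_ rfl rfl
  simp only [mem_filter, mem_univ, true_and]
  constructor
  · rintro ⟨hT, hF⟩ a ha
    cases hg : g a
    · exact hF a ⟨ha, hg⟩
    · exact hT a ⟨ha, hg⟩
  · intro h
    exact ⟨fun a ha => (h a ha.1).trans ha.2, fun a ha => (h a ha.1).trans ha.2⟩

theorem stdForm_apply (e : S) (ψ : IdemChar S) :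
    stdForm e ψ = if ψ.1 e ∧ ∀ f ∈ idempotentsLT e, ψ.1 f = false then 1 else 0 := by
  simp only [stdForm, Pi.mul_apply, prod_apply, uFun_apply, one_sub_uFun_apply,
    prod_boole, ite_zero_mul_ite_zero, mul_one]

theorem Pmin_congr {g g' : S → Bool} (h : ∀ a, IsIdempotentElem a → g a = g' a) :
    Pmin g = Pmin g' := by
  classical
  funext ψ
  rw [Pmin_apply, Pmin_apply]
  exact if_congr (forall₂_congr fun a ha => by rw [h a ha]) rfl rfl

theorem eq_of_Pmin_eq {g : S → Bool} (ψ : IdemChar S) (h : Pmin g = Pmin ψ.1) {a : S}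
    (ha : IsIdempotentElem a) : g a = ψ.1 a := by
  classical
  have hψ := congrFun h ψ
  rw [Pmin_apply, Pmin_apply, if_pos fun _ _ => rfl] at hψ
  split_ifs at hψ with hg
  · exact (hg a ha).symm
  · exact absurd hψ zero_ne_one

theorem stdForm_eq_Pmin_principalChar (hcomm : IdempotentsCommute S) {e : S}
    (he : IsIdempotentElem e) : stdForm e = Pmin (principalChar e) := by
  classical
  funext ψ
  rw [stdForm_apply, Pmin_apply]
  refine if_congr ⟨fun ⟨hψe, hψlt⟩ a ha => ?_, fun h => ⟨?_, fun f hf => ?_⟩⟩ rfl rfl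
  · have hmul := ψ.2.1 e a he ha
    rw [hψe, Bool.true_and] at hmul
    by_cases hea : e * a = e
    · rw [hea, hψe] at hmul
      simp [principalChar, hea, ← hmul]
    · have hlt : e * a ∈ idempotentsLT e :=
        mem_idempotentsLT.mpr ⟨he.mul_of_commute (hcomm e a he ha) ha, he.mul_self_mul a, hea⟩
      simp [principalChar, hea, ← hmul, hψlt _ hlt]
  · simpa [principalChar, he.eq] using h e he
  · obtain ⟨hf, hef, hfe⟩ := mem_idempotentsLT.mp hf
    simpa [principalChar, hef, hfe] using h f hf

end MinimalIdempotents

section ConjugateIdempotents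

variable {S : Type*} [Monoid S] [Fintype S] [DecidableEq S] {s t : S}

theorem prod_idempotentsLT_conj {M : Type*} [CommMonoid M] (hcomm : IdempotentsCommute S)
    (hsts : s * t * s = s) (hts : t * s * t = t) {e : S} (he : IsIdempotentElem e)
    (hle : e * (t * s) = e) (φ : S → M) :
    ∏ f ∈ idempotentsLT e, φ (s * f * t) = ∏ f ∈ idempotentsLT (s * e * t), φ f := by
  have he' : IsIdempotentElem (s * e * t) := he.conj hcomm hts
  have hle' : s * e * t * (s * t) = s * e * t := by
    rw [mul_assoc (s * e), ← mul_assoc t s t, hts]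
  have hback : ∀ f ∈ idempotentsLT e, t * (s * f * t) * s = f := fun f hf => by
    obtain ⟨hf, hef, -⟩ := mem_idempotentsLT.mp hf
    exact conj_conj_of_le hcomm hts hf (mul_eq_self_of_le hcomm he hf hef hle)
  have hforth : ∀ f ∈ idempotentsLT (s * e * t), s * (t * f * s) * t = f := fun f hf => by
    obtain ⟨hf, hef, -⟩ := mem_idempotentsLT.mp hf
    exact conj_conj_of_le hcomm hsts hf (mul_eq_self_of_le hcomm he' hf hef hle')
  refine prod_nbij' (fun f => s * f * t) (fun f => t * f * s) (fun f hf => ?_) (fun f hf => ?_)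
    hback hforth fun _ _ => rfl
  · obtain ⟨hf', hef, hfe⟩ := mem_idempotentsLT.mp hf
    refine mem_idempotentsLT.mpr ⟨hf'.conj hcomm hts, by rw [conj_mul_conj hcomm hts e hf', hef],
      fun h => hfe ?_⟩
    rw [← hback f hf, h, conj_conj_of_le hcomm hts he hle]
  · obtain ⟨hf', hef, hfe⟩ := mem_idempotentsLT.mp hf
    refine mem_idempotentsLT.mpr ⟨hf'.conj hcomm hsts, ?_, fun h => hfe ?_⟩
    · conv_lhs => rw [← conj_conj_of_le hcomm hts he hle]
      rw [conj_mul_conj hcomm hsts _ hf', hef]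
    · rw [← hforth f hf, h]

end ConjugateIdempotents

theorem Pmin_conjugation_standard_form_general {S : Type*} [Monoid S] [Fintype S] [DecidableEq S]
    (inv : S → S)
    (h1 : ∀ s, s * inv s * s = s) (h2 : ∀ s, inv s * s * inv s = inv s)
    (huniq : ∀ s t, s * t * s = s → t * s * t = t → t = inv s)
    (s : S) (χ : IdemChar S)
    (e : S) (he : e * e = e) (hle : e * (inv s * s) = e)
    (hstd : Pmin χ.1 = uFun e *
      ∏ f ∈ Finset.univ.filter (fun f : S => f * f = f ∧ e * f = f ∧ f ≠ e), (1 - uFun f)) :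
    Pmin (fun a : S => χ.1 (inv s * a * s)) = uFun (s * e * inv s) *
      ∏ f ∈ Finset.univ.filter (fun f : S => f * f = f ∧ e * f = f ∧ f ≠ e),
        (1 - uFun (s * f * inv s)) := by
  have hcomm := idempotentsCommute_of_inverse inv h1 h2 huniq
  have hχ : ∀ a, IsIdempotentElem a → χ.1 a = principalChar e a := fun _ ha =>
    eq_of_Pmin_eq (principalIdemChar hcomm e)
      (hstd.trans (stdForm_eq_Pmin_principalChar hcomm he)) ha
  have he' : IsIdempotentElem (s * e * inv s) := IsIdempotentElem.conj hcomm (h2 s) he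
  calc Pmin (fun a : S => χ.1 (inv s * a * s)) = Pmin (principalChar (s * e * inv s)) :=
        Pmin_congr fun a ha => by
          rw [hχ _ (ha.conj hcomm (h1 s))]
          exact decide_eq_decide.mpr (mul_conj_eq_self_iff hcomm (h1 s) (h2 s) he hle ha)
    _ = stdForm (s * e * inv s) := (stdForm_eq_Pmin_principalChar hcomm he').symm
    _ = _ := by rw [stdForm, ← prod_idempotentsLT_conj hcomm (h1 s) (h2 s) he hle]; rfl

/-- Let `S` be a finite unital inverse semigroup with idempotents `E`, `χ ∈ X` with
`χ(s*s) = 1`.  If `P_χ` has standard form `u_e ∏_{f < e}(1 - u_f)` with `e ≤ s*s`,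
then `P_{χ_s}` (where `χ_s(a) = χ(s* a s)`) has the conjugated standard form
`u_{ses*} ∏_{f < e}(1 - u_{sfs*})`. -/
theorem Pmin_conjugation_standard_form {S : Type*} [Monoid S] [Fintype S] [DecidableEq S]
    (inv : S → S)
    (h1 : ∀ s, s * inv s * s = s) (h2 : ∀ s, inv s * s * inv s = inv s)
    (huniq : ∀ s t, s * t * s = s → t * s * t = t → t = inv s)
    (s : S) (χ : IdemChar S) (hdom : χ.1 (inv s * s) = true)
    (e : S) (he : e * e = e) (hle : e * (inv s * s) = e)
    (hstd : Pmin χ.1 = uFun e *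
      ∏ f ∈ Finset.univ.filter (fun f : S => f * f = f ∧ e * f = f ∧ f ≠ e), (1 - uFun f)) :
    Pmin (fun a : S => χ.1 (inv s * a * s)) = uFun (s * e * inv s) *
      ∏ f ∈ Finset.univ.filter (fun f : S => f * f = f ∧ e * f = f ∧ f ≠ e),
        (1 - uFun (s * f * inv s)) :=
  Pmin_conjugation_standard_form_general inv h1 h2 huniq s χ e he hle hstd
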